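/- Continuity of the boundary pairing with respect to the graph norms (the paper's estimate (18) in a flat boundary coordinate patch, degree-0 case): For every continuously differentiable compactly supported f : ℝⁿ → ℝ and continuously differentiable compactly supported vector field v : ℝⁿ → ℝⁿ, one has |∫_{ℝ^{n−1}} f(y,0)·v_n(y,0) dy| ≤ (‖f‖²_{L²(H₊)} + ‖∇f‖²_{L²(H₊;ℝⁿ)})^{1/2} · (‖v‖²_{L²(H₊;ℝⁿ)} + ‖div v‖²_{L²(H₊)})^{1/2}, where v_n denotes the n-th component of v. -/

import Mathlib

open MeasureTheory Filter Topology RealInnerProductSpace ENNReal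

noncomputable section

/-- The (classical) divergence of a vector field on Euclidean space. -/
def diverg {n : ℕ} (v : EuclideanSpace ℝ (Fin n) → EuclideanSpace ℝ (Fin n))
    (x : EuclideanSpace ℝ (Fin n)) : ℝ :=
  ∑ i, fderiv ℝ v x (EuclideanSpace.single i 1) i

/-- The open upper half-space `H₊ = {x ∈ ℝⁿ : xₙ > 0}` (with `n = m + 1`). -/
def upperHalfSpace (m : ℕ) : Set (EuclideanSpace ℝ (Fin (m + 1))) :=
  {x | 0 < x (Fin.last m)}

/-- The identification of `ℝ^{n-1}` with the boundary of the half-space, `y ↦ (y, 0)`. -/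
def bdryEmb {m : ℕ} (y : EuclideanSpace ℝ (Fin m)) : EuclideanSpace ℝ (Fin (m + 1)) :=
  WithLp.toLp 2 (Fin.snoc (fun i => y i) 0 : Fin (m + 1) → ℝ)

open Set Function Metric

/-!
By the divergence theorem on `H₊`, whose outward normal on the boundary is `-eₙ`, the boundary
integral equals `-∫_{H₊} div (f • v) = -∫_{H₊} (⟪∇f, v⟫ + f div v)`. The integrand is bounded
pointwise by `‖∇f‖ ‖v‖ + |f| |div v|`; Cauchy–Schwarz in `L²(H₊)` for each product, and then in
`ℝ²` for the resulting sum, gives the estimate.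
-/

section Regularity

variable {F : Type*} [NormedAddCommGroup F] [InnerProductSpace ℝ F] [CompleteSpace F]
  {f : F → ℝ} {n : ℕ} {v : EuclideanSpace ℝ (Fin n) → EuclideanSpace ℝ (Fin n)}

lemma ContDiff.continuous_gradient (hf : ContDiff ℝ 1 f) : Continuous (gradient f) :=
  (InnerProductSpace.toDual ℝ F).symm.continuous.comp (hf.continuous_fderiv one_ne_zero)

lemma HasCompactSupport.gradient (hf : HasCompactSupport f) : HasCompactSupport (gradient f) :=
  (hf.fderiv ℝ).comp_left (map_zero _)

lemma ContDiff.continuous_diverg (hv : ContDiff ℝ 1 v) : Continuous (diverg v) :=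
  continuous_finsetSum _ fun i _ => (EuclideanSpace.proj (𝕜 := ℝ) i).continuous.comp
    ((hv.continuous_fderiv one_ne_zero).clm_apply continuous_const)

lemma HasCompactSupport.diverg (hv : HasCompactSupport v) : HasCompactSupport (diverg v) := by
  have hdiv : _root_.diverg v = (fun L : EuclideanSpace ℝ (Fin n) →L[ℝ] EuclideanSpace ℝ (Fin n) =>
      ∑ i, L (EuclideanSpace.single i 1) i) ∘ fderiv ℝ v := rfl
  exact hdiv ▸ (hv.fderiv ℝ).comp_left (by simp)

end Regularity

theorem diverg_smul {n : ℕ} {f : EuclideanSpace ℝ (Fin n) → ℝ}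
    {v : EuclideanSpace ℝ (Fin n) → EuclideanSpace ℝ (Fin n)} {x : EuclideanSpace ℝ (Fin n)}
    (hf : DifferentiableAt ℝ f x) (hv : DifferentiableAt ℝ v x) :
    diverg (fun y => f y • v y) x = ⟪gradient f x, v x⟫ + f x * diverg v x := by
  have hexpand : ∑ i, fderiv ℝ f x (EuclideanSpace.single i 1) * v x i = fderiv ℝ f x (v x) := by
    conv_rhs => rw [← (EuclideanSpace.basisFun (Fin n) ℝ).sum_repr (v x)]
    simp [mul_comm]
  rw [gradient, InnerProductSpace.toDual_symm_apply, ← hexpand, diverg, diverg,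
    fderiv_fun_smul hf hv, Finset.mul_sum, ← Finset.sum_add_distrib]
  refine Finset.sum_congr rfl fun i _ => ?_
  simp [add_comm]

lemma abs_lt_of_mem_ball_zero {ι : Type*} [Fintype ι] {x : ι → ℝ} {R : ℝ} (hx : x ∈ ball 0 R)
    (i : ι) : |x i| < R :=
  (norm_le_pi_norm x i).trans_lt (mem_ball_zero_iff.1 hx)

section DivergenceHalfSpace

variable {E : Type*} [NormedAddCommGroup E] [NormedSpace ℝ E] {n : ℕ} {R : ℝ}

lemma setIntegral_halfSpace_eq_setIntegral_Icc {g : (Fin (n + 1) → ℝ) → E}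
    (hg : support g ⊆ ball 0 R) :
    ∫ x in {x | 0 < x (Fin.last n)}, g x
      = ∫ x in Icc (update (fun _ => -R) (Fin.last n) 0) (fun _ => R), g x := by
  have hplane : ∀ᵐ x : Fin (n + 1) → ℝ, x (Fin.last n) ≠ 0 := by
    refine compl_mem_ae_iff.2 ?_
    rw [volume_pi]
    exact Measure.pi_hyperplane _ (Fin.last n) 0
  rw [← integral_indicator (measurableSet_lt measurable_const (measurable_pi_apply _)),
    ← integral_indicator measurableSet_Icc]
  refine integral_congr_ae ?_
  filter_upwards [hplane] with x hx
  by_cases hgx : g x = 0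
  · rw [indicator_apply_eq_zero.2 fun _ => hgx, indicator_apply_eq_zero.2 fun _ => hgx]
  have hR := abs_lt_of_mem_ball_zero (hg hgx)
  have hmem : x ∈ Icc (update (fun _ => -R) (Fin.last n) 0) (fun _ => R) ↔
      x ∈ {x | 0 < x (Fin.last n)} := by
    refine ⟨fun h => lt_of_le_of_ne (by simpa using h.1 (Fin.last n)) hx.symm,
      fun h => ⟨fun i => ?_, fun i => (abs_lt.1 (hR i)).2.le⟩⟩
    rcases eq_or_ne i (Fin.last n) with rfl | hi
    · simpa using h.le
    · simpa [update_of_ne hi] using (abs_lt.1 (hR i)).1.le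
  by_cases hpos : x ∈ {x | 0 < x (Fin.last n)}
  · rw [indicator_of_mem hpos, indicator_of_mem (hmem.2 hpos)]
  · rw [indicator_of_notMem hpos, indicator_of_notMem (mt hmem.1 hpos)]

theorem integral_divergence_halfSpace_of_hasCompactSupport
    (f : Fin (n + 1) → (Fin (n + 1) → ℝ) → E)
    (f' : Fin (n + 1) → (Fin (n + 1) → ℝ) → (Fin (n + 1) → ℝ) →L[ℝ] E)
    (hf : ∀ i x, HasFDerivAt (f i) (f' i x) x) (hsupp : ∀ i, HasCompactSupport (f i))
    (hint : Integrable fun x => ∑ i, f' i x (Pi.single i 1)) :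
    ∫ x in {x | 0 < x (Fin.last n)}, ∑ i, f' i x (Pi.single i 1)
      = -∫ y, f (Fin.last n) (Fin.snoc y 0) := by
  obtain ⟨R, hR0, hR⟩ := (isCompact_iUnion hsupp).isBounded.subset_ball_lt 0 0
  have hfR : ∀ i, support (f i) ⊆ ball 0 R :=
    fun i => (subset_tsupport _).trans ((subset_iUnion _ i).trans hR)
  have hf'0 : ∀ i x, x ∉ ball 0 R → f' i x = 0 := fun i x hx => by
    by_contra h
    refine hx (hR (mem_iUnion_of_mem i (support_fderiv_subset ℝ ?_)))
    rwa [mem_support, (hf i x).fderiv]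
  have hdivR : support (fun x => ∑ i, f' i x (Pi.single i 1)) ⊆ ball 0 R :=
    support_subset_iff'.2 fun x hx => Finset.sum_eq_zero fun i _ => by simp [hf'0 i x hx]
  have hface : ∀ i c y, R ≤ |c| → f i (i.insertNth c y) = 0 := fun i c y hc =>
    notMem_support.1 fun h => (abs_lt_of_mem_ball_zero (hfR i h) i).not_ge (by simpa using hc)
  have hfront : ∀ i y, f i (i.insertNth R y) = 0 := fun i y => hface i R y (le_abs_self R)
  have hback : ∀ i y, f i (i.insertNth (-R) y) = 0 :=
    fun i y => hface i (-R) y (abs_neg R ▸ le_abs_self R)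
  have hab : update (fun _ => -R) (Fin.last n) 0 ≤ fun _ => R := fun i => by
    rcases eq_or_ne i (Fin.last n) with rfl | hi
    · simpa using hR0.le
    · simpa [update_of_ne hi] using hR0.le
  -- On the box `[-R, R]ⁿ × [0, R]` only the bottom face `xₙ = 0` meets the supports of the `f i`.
  rw [setIntegral_halfSpace_eq_setIntegral_Icc hdivR,
    integral_divergence_of_hasFDerivAt_off_countable' _ _ hab f f' ∅ countable_empty
      (fun i => (continuous_iff_continuousAt.2 fun x => (hf i x).continuousAt).continuousOn)
      (fun x _ i => hf i x) hint.integrableOn,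
    Finset.sum_eq_single (Fin.last n)]
  · have hbottom : update (fun _ => -R) (Fin.last n) 0 ∘ Fin.castSucc = fun _ => -R :=
      funext fun j => update_of_ne (Fin.castSucc_lt_last j).ne _ _
    simp only [hfront, integral_zero, zero_sub, update_self]
    simp only [Fin.succAbove_last, Fin.insertNth_last', hbottom, neg_inj]
    refine setIntegral_eq_integral_of_forall_compl_eq_zero fun y hy => ?_
    by_contra h
    have hyR := abs_lt_of_mem_ball_zero (hfR _ h)
    exact hy ⟨fun j => by simpa using (abs_lt.1 (hyR j.castSucc)).1.le,
      fun j => by simpa using (abs_lt.1 (hyR j.castSucc)).2.le⟩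
  · intro i _ hi
    simp only [update_of_ne hi, hfront, hback, integral_zero, sub_self]
  · simp

end DivergenceHalfSpace

theorem integral_diverg_upperHalfSpace {m : ℕ}
    {w : EuclideanSpace ℝ (Fin (m + 1)) → EuclideanSpace ℝ (Fin (m + 1))}
    (hw : Differentiable ℝ w) (hws : HasCompactSupport w) (hint : Integrable (diverg w)) :
    ∫ x in upperHalfSpace m, diverg w x = -∫ y, w (bdryEmb y) (Fin.last m) := by
  set η := (EuclideanSpace.equiv (Fin (m + 1)) ℝ).symm
  have hη : MeasurePreserving η := PiLp.volume_preserving_toLp _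
  have key := integral_divergence_halfSpace_of_hasCompactSupport (fun i x => w (η x) i)
    (fun i x => (EuclideanSpace.proj i).comp ((fderiv ℝ w (η x)).comp η.toContinuousLinearMap))
    (fun i x => (EuclideanSpace.proj (𝕜 := ℝ) i).hasFDerivAt.comp x
      ((hw _).hasFDerivAt.comp x η.hasFDerivAt))
    (fun i => (hws.comp_homeomorph η.toHomeomorph).comp_left
      (g := fun u : EuclideanSpace ℝ (Fin (m + 1)) => u i) rfl)
    (hη.integrable_comp_of_integrable hint)
  have hemb : MeasurableEmbedding η := η.toHomeomorph.measurableEmbedding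
  rw [← hη.setIntegral_preimage_emb hemb, ← (PiLp.volume_preserving_toLp (Fin m)).integral_comp
    (MeasurableEquiv.toLp 2 (Fin m → ℝ)).measurableEmbedding]
  exact key

section L2

variable {α : Type*} [MeasurableSpace α] {μ : Measure α}

lemma integral_abs_mul_abs_le_sqrt_mul_sqrt {f g : α → ℝ} (hf : MemLp f 2 μ) (hg : MemLp g 2 μ) :
    ∫ x, |f x| * |g x| ∂μ ≤ √(∫ x, f x ^ 2 ∂μ) * √(∫ x, g x ^ 2 ∂μ) := by
  have h := integral_mul_norm_le_Lp_mul_Lq (μ := μ) .two_two (by simpa using hf) (by simpa using hg)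
  simpa [Real.sqrt_eq_rpow, Real.rpow_two] using h

lemma sqrt_mul_sqrt_add_sqrt_mul_sqrt_le {A B C D : ℝ} (hA : 0 ≤ A) (hB : 0 ≤ B) (hC : 0 ≤ C)
    (hD : 0 ≤ D) : √A * √C + √B * √D ≤ √(A + B) * √(C + D) := by
  rw [← Real.sqrt_mul (add_nonneg hA hB)]
  apply Real.le_sqrt_of_sq_le
  nlinarith [sq_nonneg (√A * √D - √B * √C), Real.sq_sqrt hA, Real.sq_sqrt hB, Real.sq_sqrt hC,
    Real.sq_sqrt hD]

theorem abs_integral_le_sqrt_mul_sqrt_of_abs_le {G a b c d : α → ℝ} (ha : MemLp a 2 μ)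
    (hb : MemLp b 2 μ) (hc : MemLp c 2 μ) (hd : MemLp d 2 μ)
    (hG : ∀ᵐ x ∂μ, |G x| ≤ |a x| * |c x| + |b x| * |d x|) :
    |∫ x, G x ∂μ|
      ≤ √(∫ x, a x ^ 2 ∂μ + ∫ x, b x ^ 2 ∂μ) * √(∫ x, c x ^ 2 ∂μ + ∫ x, d x ^ 2 ∂μ) := by
  have hac : Integrable (fun x => |a x| * |c x|) μ := ha.abs.integrable_mul hc.abs
  have hbd : Integrable (fun x => |b x| * |d x|) μ := hb.abs.integrable_mul hd.abs
  calc |∫ x, G x ∂μ| ≤ ∫ x, |G x| ∂μ := abs_integral_le_integral_abs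
    _ ≤ ∫ x, (|a x| * |c x| + |b x| * |d x|) ∂μ :=
      integral_mono_of_nonneg (.of_forall fun _ => abs_nonneg _) (hac.add hbd) hG
    _ = ∫ x, |a x| * |c x| ∂μ + ∫ x, |b x| * |d x| ∂μ := integral_add hac hbd
    _ ≤ √(∫ x, a x ^ 2 ∂μ) * √(∫ x, c x ^ 2 ∂μ) + √(∫ x, b x ^ 2 ∂μ) * √(∫ x, d x ^ 2 ∂μ) :=
      add_le_add (integral_abs_mul_abs_le_sqrt_mul_sqrt ha hc)
        (integral_abs_mul_abs_le_sqrt_mul_sqrt hb hd)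
    _ ≤ _ := sqrt_mul_sqrt_add_sqrt_mul_sqrt_le (integral_nonneg fun _ => sq_nonneg _)
      (integral_nonneg fun _ => sq_nonneg _) (integral_nonneg fun _ => sq_nonneg _)
      (integral_nonneg fun _ => sq_nonneg _)

end L2

/-- **Continuity of the boundary pairing with respect to the graph norms**
(degree-0 case, flat boundary chart):
`|∫_{ℝ^{n−1}} f(y,0)·vₙ(y,0) dy| ≤ (‖f‖² + ‖∇f‖²)^{1/2} (‖v‖² + ‖div v‖²)^{1/2}`,
with all the norms on the right taken in `L²` of the half-space `H₊`. -/
theorem boundary_pairing_graph_norm_estimate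
    (m : ℕ)
    (f : EuclideanSpace ℝ (Fin (m + 1)) → ℝ)
    (v : EuclideanSpace ℝ (Fin (m + 1)) → EuclideanSpace ℝ (Fin (m + 1)))
    (hf : ContDiff ℝ 1 f) (hfsupp : HasCompactSupport f)
    (hv : ContDiff ℝ 1 v) (hvsupp : HasCompactSupport v) :
    |∫ y : EuclideanSpace ℝ (Fin m), f (bdryEmb y) * v (bdryEmb y) (Fin.last m)|
      ≤ Real.sqrt ((∫ x in upperHalfSpace m, (f x) ^ 2)
            + ∫ x in upperHalfSpace m, ‖gradient f x‖ ^ 2)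
        * Real.sqrt ((∫ x in upperHalfSpace m, ‖v x‖ ^ 2)
            + ∫ x in upperHalfSpace m, (diverg v x) ^ 2) := by
  have hfd := hf.differentiable one_ne_zero
  have hvd := hv.differentiable one_ne_zero
  have hfv : ContDiff ℝ 1 fun x => f x • v x := hf.smul hv
  have hfvsupp : HasCompactSupport fun x => f x • v x := hfsupp.smul_right
  have hL2 : ∀ {g : EuclideanSpace ℝ (Fin (m + 1)) → ℝ}, Continuous g → HasCompactSupport g →
      MemLp g 2 (volume.restrict (upperHalfSpace m)) :=
    fun hg hgs => (hg.memLp_of_hasCompactSupport hgs).restrict _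
  have hpointwise : ∀ x, |diverg (fun x => f x • v x) x|
      ≤ |f x| * |diverg v x| + |‖gradient f x‖| * |‖v x‖| := fun x => by
    rw [diverg_smul (hfd x) (hvd x), abs_norm, abs_norm, add_comm (|f x| * _), ← abs_mul]
    exact (abs_add_le _ _).trans (add_le_add_left (abs_real_inner_le_norm _ _) _)
  calc |∫ y, f (bdryEmb y) * v (bdryEmb y) (Fin.last m)|
      = |∫ x in upperHalfSpace m, diverg (fun x => f x • v x) x| := by
        rw [integral_diverg_upperHalfSpace (hfv.differentiable one_ne_zero) hfvsupp
          (hfv.continuous_diverg.integrable_of_hasCompactSupport hfvsupp.diverg), abs_neg]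
        rfl
    _ ≤ _ := abs_integral_le_sqrt_mul_sqrt_of_abs_le (hL2 hf.continuous hfsupp)
        (hL2 hf.continuous_gradient.norm hfsupp.gradient.norm)
        (hL2 hv.continuous_diverg hvsupp.diverg) (hL2 hv.continuous.norm hvsupp.norm)
        (.of_forall hpointwise)
    _ = _ := by rw [add_comm (∫ x in upperHalfSpace m, diverg v x ^ 2)]
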